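/- Let (X,d) be a uniquely geodesic metric space and A ⊆ X a nonempty convex set. If the lion always wins the Lion-Man game played in A, then A is directionally bounded. -/
import Mathlib


open Set Filter Metric

section Defs

variable {X : Type*} [MetricSpace X]

/-- A unit-speed geodesic defined on `[a, b]`. -/
def IsGeodesicOn (γ : ℝ → X) (a b : ℝ) : Prop :=
  ∀ s ∈ Set.Icc a b, ∀ t ∈ Set.Icc a b, dist (γ s) (γ t) = |s - t|

/-- `S` is a geodesic segment joining `x` and `y`. -/
def IsGeodesicSegment (S : Set X) (x y : X) : Prop :=
  ∃ (a b : ℝ) (γ : ℝ → X), a ≤ b ∧ IsGeodesicOn γ a b ∧ γ a = x ∧ γ b = y ∧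
    S = γ '' Set.Icc a b

/-- A geodesic space: every two points are joined by a geodesic segment. -/
def GeodesicSpace (X : Type*) [MetricSpace X] : Prop :=
  ∀ x y : X, ∃ S : Set X, IsGeodesicSegment S x y

/-- A uniquely geodesic space. -/
def UniquelyGeodesic (X : Type*) [MetricSpace X] : Prop :=
  ∀ x y : X, ∃! S : Set X, IsGeodesicSegment S x y

/-- `S` is contained in the closed `M`-neighborhood of `T`. -/
def InClosedNbhd (S T : Set X) (M : ℝ) : Prop :=
  ∀ p ∈ S, ∃ q ∈ T, dist p q ≤ M

/-- A triangle with sides `S1, S2, S3` is `M`-slim. -/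
def SlimTriangle (S1 S2 S3 : Set X) (M : ℝ) : Prop :=
  InClosedNbhd S1 (S2 ∪ S3) M ∧ InClosedNbhd S2 (S1 ∪ S3) M ∧ InClosedNbhd S3 (S1 ∪ S2) M

/-- `X` is `δ`-hyperbolic: every geodesic triangle is `δ`-slim. -/
def DeltaHyperbolic (X : Type*) [MetricSpace X] (δ : ℝ) : Prop :=
  ∀ x y z : X, ∀ S1 S2 S3 : Set X,
    IsGeodesicSegment S1 x y → IsGeodesicSegment S2 y z → IsGeodesicSegment S3 z x →
    SlimTriangle S1 S2 S3 δ

/-- A geodesic ray `γ : [0, ∞) → X`. -/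
def IsGeodesicRay (γ : ℝ → X) : Prop :=
  ∀ s ∈ Set.Ici (0:ℝ), ∀ t ∈ Set.Ici (0:ℝ), dist (γ s) (γ t) = |s - t|

/-- A set is geodesically bounded if it contains no geodesic ray. -/
def GeodesicallyBounded (A : Set X) : Prop :=
  ¬ ∃ γ : ℝ → X, IsGeodesicRay γ ∧ ∀ t ∈ Set.Ici (0:ℝ), γ t ∈ A

/-- A directional curve `γ : [0, ∞) → X` (with some constant `b ≥ 0`). -/
def IsDirectionalCurve (γ : ℝ → X) : Prop :=
  ∃ b : ℝ, 0 ≤ b ∧ ∀ s ∈ Set.Ici (0:ℝ), ∀ t ∈ Set.Ici (0:ℝ),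
    |s - t| - b ≤ dist (γ s) (γ t) ∧ dist (γ s) (γ t) ≤ |s - t|

/-- A set is directionally bounded if it contains no directional curve. -/
def DirectionallyBounded (A : Set X) : Prop :=
  ¬ ∃ γ : ℝ → X, IsDirectionalCurve γ ∧ ∀ t ∈ Set.Ici (0:ℝ), γ t ∈ A

/-- A subset of a geodesic space is convex if every geodesic segment joining two of its
points is contained in it. -/
def GeodesicConvex (A : Set X) : Prop :=
  ∀ x ∈ A, ∀ y ∈ A, ∀ S : Set X, IsGeodesicSegment S x y → S ⊆ A

/-- The comparison point in the Euclidean plane: the point on the segment from `x'` to `y'`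
(of length `L`) at distance `t` from `x'`. -/
noncomputable def cmpPt (x' y' : EuclideanSpace ℝ (Fin 2)) (L t : ℝ) :
    EuclideanSpace ℝ (Fin 2) :=
  AffineMap.lineMap x' y' (t / L)

/-- `X` is a CAT(0) space: it is geodesic and for every geodesic triangle and every
comparison triangle in the Euclidean plane, distances between points on the triangle are
bounded by the distances between the corresponding comparison points. -/
def CAT0Space (X : Type*) [MetricSpace X] : Prop :=
  GeodesicSpace X ∧
  ∀ (x y z : X) (γ1 γ2 γ3 : ℝ → X),
    IsGeodesicOn γ1 0 (dist x y) → γ1 0 = x → γ1 (dist x y) = y →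
    IsGeodesicOn γ2 0 (dist y z) → γ2 0 = y → γ2 (dist y z) = z →
    IsGeodesicOn γ3 0 (dist z x) → γ3 0 = z → γ3 (dist z x) = x →
    ∀ x' y' z' : EuclideanSpace ℝ (Fin 2),
      dist x' y' = dist x y → dist y' z' = dist y z → dist z' x' = dist z x →
      (∀ s ∈ Set.Icc (0:ℝ) (dist x y), ∀ t ∈ Set.Icc (0:ℝ) (dist y z),
        dist (γ1 s) (γ2 t) ≤ dist (cmpPt x' y' (dist x y) s) (cmpPt y' z' (dist y z) t)) ∧
      (∀ s ∈ Set.Icc (0:ℝ) (dist y z), ∀ t ∈ Set.Icc (0:ℝ) (dist z x),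
        dist (γ2 s) (γ3 t) ≤ dist (cmpPt y' z' (dist y z) s) (cmpPt z' x' (dist z x) t)) ∧
      (∀ s ∈ Set.Icc (0:ℝ) (dist z x), ∀ t ∈ Set.Icc (0:ℝ) (dist x y),
        dist (γ3 s) (γ1 t) ≤ dist (cmpPt z' x' (dist z x) s) (cmpPt x' y' (dist x y) t))

/-- Busemann convexity. -/
def BusemannConvex (X : Type*) [MetricSpace X] : Prop :=
  GeodesicSpace X ∧
  ∀ (a b c d : ℝ) (γ σ : ℝ → X), a ≤ b → c ≤ d →
    IsGeodesicOn γ a b → IsGeodesicOn σ c d →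
    ∀ t ∈ Set.Icc (0:ℝ) 1,
      dist (γ ((1-t)*a + t*b)) (σ ((1-t)*c + t*d)) ≤
        (1-t) * dist (γ a) (σ c) + t * dist (γ b) (σ d)

/-- A `(lam, eps)`-quasi-geodesic defined on `[a, b]`. -/
def IsQuasiGeodesicOn (lam eps : ℝ) (γ : ℝ → X) (a b : ℝ) : Prop :=
  ∀ s ∈ Set.Icc a b, ∀ t ∈ Set.Icc a b,
    (1/lam) * |s - t| - eps ≤ dist (γ s) (γ t) ∧ dist (γ s) (γ t) ≤ lam * |s - t| + eps

/-- A `(lam, eps)`-quasi-geodesic ray. -/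
def IsQuasiGeodesicRay (lam eps : ℝ) (γ : ℝ → X) : Prop :=
  ∀ s ∈ Set.Ici (0:ℝ), ∀ t ∈ Set.Ici (0:ℝ),
    (1/lam) * |s - t| - eps ≤ dist (γ s) (γ t) ∧ dist (γ s) (γ t) ≤ lam * |s - t| + eps

/-- A `k`-local `lam`-quasi-geodesic ray: a `(lam, eps)`-quasi-geodesic ray locally,
for every `eps > 0`. -/
def IsLocalQuasiGeodesicRay (k lam : ℝ) (γ : ℝ → X) : Prop :=
  ∀ eps > (0:ℝ), ∀ s ∈ Set.Ici (0:ℝ), ∀ t ∈ Set.Ici (0:ℝ), |s - t| ≤ k →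
    (1/lam) * |s - t| - eps ≤ dist (γ s) (γ t) ∧ dist (γ s) (γ t) ≤ lam * |s - t| + eps

/-- `S` is the image of a `lam`-quasi-geodesic joining `x` and `y`
(i.e. a `(lam, eps)`-quasi-geodesic for every `eps > 0`). -/
def IsQuasiGeodesicSegment (lam : ℝ) (S : Set X) (x y : X) : Prop :=
  ∃ (a b : ℝ) (γ : ℝ → X), a ≤ b ∧ (∀ eps > (0:ℝ), IsQuasiGeodesicOn lam eps γ a b) ∧
    γ a = x ∧ γ b = y ∧ S = γ '' Set.Icc a b

/-- Every `lam`-quasi-geodesic triangle in `X` is `M`-slim. -/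
def QuasiGeodesicTrianglesSlim (X : Type*) [MetricSpace X] (lam M : ℝ) : Prop :=
  ∀ x y z : X, ∀ S1 S2 S3 : Set X,
    IsQuasiGeodesicSegment lam S1 x y → IsQuasiGeodesicSegment lam S2 y z →
    IsQuasiGeodesicSegment lam S3 z x → SlimTriangle S1 S2 S3 M

/-- A play of the Lion-Man game in `A` with speed `D`. -/
def IsLionManPlay (A : Set X) (D : ℝ) (L M : ℕ → X) : Prop :=
  (∀ n, L n ∈ A) ∧ (∀ n, M n ∈ A) ∧
  (∀ n, ∃ S : Set X, IsGeodesicSegment S (L n) (M n) ∧ L (n+1) ∈ S) ∧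
  (∀ n, dist (L n) (L (n+1)) = min D (dist (L n) (M n))) ∧
  (∀ n, dist (M n) (M (n+1)) ≤ D)

/-- The lion wins a play if `d(L_{n+1}, M_n) → 0`. -/
def LionWins (L M : ℕ → X) : Prop :=
  Filter.Tendsto (fun n => dist (L (n+1)) (M n)) Filter.atTop (nhds 0)

/-- The lion always wins the Lion-Man game played in `A`. -/
def LionAlwaysWins (A : Set X) : Prop :=
  ∀ D > (0:ℝ), ∀ L M : ℕ → X, IsLionManPlay A D L M → LionWins L M

end Defs

/-- Given two points, there is a point on some geodesic segment joining them at
distance `min 1 (dist x y)` from the first. -/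
lemma exists_step_aux {X : Type*} [MetricSpace X] (hX : UniquelyGeodesic X) (x y : X) :
    ∃ z : X, (∃ S, IsGeodesicSegment S x y ∧ z ∈ S) ∧ dist x z = min 1 (dist x y) := by
  obtain ⟨S, hS, -⟩ := hX x y
  obtain ⟨a, b', γ', hab, hgeo, ha, hb, hSeq⟩ := hS
  have hd : dist x y = b' - a := by
    rw [← ha, ← hb, hgeo a ⟨le_refl a, hab⟩ b' ⟨hab, le_refl b'⟩, abs_sub_comm,
      abs_of_nonneg (by linarith)]
  have hmin0 : 0 ≤ min 1 (dist x y) := le_min zero_le_one dist_nonneg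
  have hminle : min 1 (dist x y) ≤ b' - a := hd ▸ min_le_right _ _
  have ht : a + min 1 (dist x y) ∈ Set.Icc a b' := ⟨by linarith, by linarith⟩
  refine ⟨γ' (a + min 1 (dist x y)),
    ⟨S, ⟨a, b', γ', hab, hgeo, ha, hb, hSeq⟩, hSeq ▸ ⟨_, ht, rfl⟩⟩, ?_⟩
  have hcalc := hgeo a ⟨le_refl a, hab⟩ _ ht
  rw [ha] at hcalc
  rw [hcalc, show a - (a + min 1 (dist x y)) = -(min 1 (dist x y)) by ring, abs_neg,
    abs_of_nonneg hmin0]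

/-- In a uniquely geodesic space, if the lion always wins the Lion-Man game played in a
nonempty convex set `A`, then `A` is directionally bounded. -/
theorem stmt9 {X : Type*} [MetricSpace X] (hX : UniquelyGeodesic X)
    (A : Set X) (hA : A.Nonempty) (hconv : GeodesicConvex A)
    (hwin : LionAlwaysWins A) : DirectionallyBounded A := by
  intro hdir
  obtain ⟨γ, ⟨b, hb0, hγ⟩, hmem⟩ := hdir
  set M : ℕ → X := fun n => γ (b + 2 + n) with hM
  have hMA : ∀ n, M n ∈ A := fun n => hmem _ (by simp only [Set.mem_Ici]; positivity)
  choose f hfseg hfdist using fun x y => exists_step_aux hX x y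
  set L : ℕ → X := fun n => Nat.rec (γ 0) (fun k Lk => f Lk (M k)) n with hL
  have hLsucc : ∀ n, L (n + 1) = f (L n) (M n) := fun n => rfl
  have hLA : ∀ n, L n ∈ A := by
    intro n
    induction n with
    | zero => exact hmem 0 Set.self_mem_Ici
    | succ k ih =>
      obtain ⟨S, hS, hz⟩ := hfseg (L k) (M k)
      exact hconv _ ih _ (hMA k) S hS hz
  have hstep : ∀ n, dist (L n) (L (n + 1)) = min 1 (dist (L n) (M n)) := by
    intro n; rw [hLsucc n]; exact hfdist _ _
  have hstep1 : ∀ n, dist (L n) (L (n + 1)) ≤ 1 := by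
    intro n; rw [hstep n]; exact min_le_left _ _
  have hLdist : ∀ n : ℕ, dist (L n) (γ 0) ≤ n := by
    intro n
    induction n with
    | zero => simp [hL]
    | succ k ih =>
      calc dist (L (k + 1)) (γ 0) ≤ dist (L (k + 1)) (L k) + dist (L k) (γ 0) :=
            dist_triangle _ _ _
        _ ≤ 1 + k := by
            rw [dist_comm]
            exact add_le_add (hstep1 k) ih
        _ = ((k + 1 : ℕ) : ℝ) := by push_cast; ring
  have hMdist : ∀ n : ℕ, (n : ℝ) + 2 ≤ dist (M n) (γ 0) := by
    intro n
    have h := (hγ (b + 2 + n) (Set.mem_Ici.mpr (by positivity)) 0 Set.self_mem_Ici).1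
    have habs : |b + 2 + (n : ℝ) - 0| = b + 2 + n := by
      rw [sub_zero]; exact abs_of_nonneg (by positivity)
    rw [habs] at h
    linarith
  have key : ∀ n, (1 : ℝ) ≤ dist (L (n + 1)) (M n) := by
    intro n
    have h1 := hLdist (n + 1)
    have h2 := hMdist n
    have h3 := dist_triangle (M n) (L (n + 1)) (γ 0)
    rw [dist_comm (M n) (L (n + 1))] at h3
    push_cast at h1
    linarith
  have hplay : IsLionManPlay A 1 L M := by
    refine ⟨hLA, hMA, fun n => ?_, hstep, fun n => ?_⟩
    · obtain ⟨S, hS, hz⟩ := hfseg (L n) (M n)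
      exact ⟨S, hS, by rw [hLsucc n]; exact hz⟩
    · have h := (hγ (b + 2 + n) (Set.mem_Ici.mpr (by positivity)) (b + 2 + (n + 1)) (Set.mem_Ici.mpr (by positivity))).2
      have habs : |b + 2 + (n : ℝ) - (b + 2 + ((n : ℕ) + 1 : ℕ))| = 1 := by
        push_cast
        rw [show b + 2 + (n : ℝ) - (b + 2 + ((n : ℝ) + 1)) = -1 by ring]
        simp
      calc dist (M n) (M (n + 1)) ≤ |b + 2 + (n : ℝ) - (b + 2 + ((n + 1 : ℕ) : ℝ))| := by
            simpa [hM] using h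
        _ ≤ 1 := by push_cast; rw [show b + 2 + (n : ℝ) - (b + 2 + ((n : ℝ) + 1)) = -1 by ring]; simp
  have hw := hwin 1 one_pos L M hplay
  have : (1 : ℝ) ≤ 0 := ge_of_tendsto' hw key
  linarith
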